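/- arXiv:2605.10792 — 5 statements merged into one kernel-verified Lean document; each statement's English description precedes it below -/
import Mathlib

section
/- Let g : ℝ^p × ℝ^d → ℝ be continuously differentiable and fix z ∈ ℝ^d. Suppose y* : ℝ^p → ℝ^d is differentiable and, for every θ ∈ ℝ^p, y*(θ) is a global minimizer of y ↦ (1/2)‖y − z‖² + g(θ, y). Then the value function h(θ) = (1/2)‖y*(θ) − z‖² + g(θ, y*(θ)) is differentiable with ∇h(θ) = ∇_θ g(θ, y*(θ)); in particular the derivative of h does not involve the derivative of θ ↦ y*(θ). -/
open ContinuousLinearMap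

/-- Envelope theorem: at a minimizer the partial derivative of `f` in its second variable vanishes,
so the chain-rule term through `y` drops out. -/
theorem HasFDerivAt.comp_prodMk_of_isLocalMin {E F : Type*}
    [NormedAddCommGroup E] [NormedSpace ℝ E] [NormedAddCommGroup F] [NormedSpace ℝ F]
    {f : E × F → ℝ} {y : E → F} {x : E} {L : E × F →L[ℝ] ℝ}
    (hf : HasFDerivAt f L (x, y x)) (hy : DifferentiableAt ℝ y x)
    (hmin : IsLocalMin (fun v => f (x, v)) (y x)) :
    HasFDerivAt (fun x' => f (x', y x')) (L.comp (inl ℝ E F)) x := by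
  have hpartial : L.comp (inr ℝ E F) = 0 :=
    hmin.hasFDerivAt_eq_zero (hf.comp (y x) (hasFDerivAt_prodMk_right x (y x)))
  have hchain := hf.comp x ((hasFDerivAt_id x).prodMk hy.hasFDerivAt)
  refine hchain.congr_fderiv (ContinuousLinearMap.ext fun u => ?_)
  have hsplit : (u, fderiv ℝ y x u) = inl ℝ E F u + inr ℝ E F (fderiv ℝ y x u) := by simp
  have hzero : L (inr ℝ E F (fderiv ℝ y x u)) = 0 := by
    simpa using congrArg (fun M : F →L[ℝ] ℝ => M (fderiv ℝ y x u)) hpartial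
  simp only [comp_apply, prod_apply, id_apply, hsplit, map_add, hzero, add_zero]

theorem DifferentiableAt.hasFDerivAt_comp_prodMk_of_isLocalMin {E F : Type*}
    [NormedAddCommGroup E] [NormedSpace ℝ E] [NormedAddCommGroup F] [NormedSpace ℝ F]
    {f : E × F → ℝ} {y : E → F} {x : E}
    (hf : DifferentiableAt ℝ f (x, y x)) (hy : DifferentiableAt ℝ y x)
    (hmin : IsLocalMin (fun v => f (x, v)) (y x)) :
    HasFDerivAt (fun x' => f (x', y x')) (fderiv ℝ (fun x' => f (x', y x)) x) x := by
  have hslice : HasFDerivAt (fun x' => f (x', y x)) ((fderiv ℝ f (x, y x)).comp (inl ℝ E F)) x :=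
    hf.hasFDerivAt.comp x (hasFDerivAt_prodMk_left x (y x))
  rw [hslice.fderiv]
  exact hf.hasFDerivAt.comp_prodMk_of_isLocalMin hy hmin

/-- Envelope theorem for the proximal value function: if `y*(θ)` is a global minimizer of
`y ↦ (1/2)‖y - z‖² + g(θ, y)` for every `θ`, and `y*` is differentiable, then the value
function `h(θ) = (1/2)‖y*(θ) - z‖² + g(θ, y*(θ))` has gradient `∇_θ g(θ, y*(θ))`:
no derivative of `θ ↦ y*(θ)` appears. -/
theorem stmt_3 (p d : ℕ)
    (g : EuclideanSpace ℝ (Fin p) → EuclideanSpace ℝ (Fin d) → ℝ)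
    (hg : ContDiff ℝ 1
      (fun q : EuclideanSpace ℝ (Fin p) × EuclideanSpace ℝ (Fin d) => g q.1 q.2))
    (z : EuclideanSpace ℝ (Fin d))
    (ystar : EuclideanSpace ℝ (Fin p) → EuclideanSpace ℝ (Fin d))
    (hydiff : Differentiable ℝ ystar)
    (hmin : ∀ θ y, (1 / 2 : ℝ) * ‖ystar θ - z‖ ^ 2 + g θ (ystar θ)
      ≤ (1 / 2 : ℝ) * ‖y - z‖ ^ 2 + g θ y) :
    ∀ θ : EuclideanSpace ℝ (Fin p),
      HasGradientAt (fun θ' => (1 / 2 : ℝ) * ‖ystar θ' - z‖ ^ 2 + g θ' (ystar θ'))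
        (gradient (fun θ' => g θ' (ystar θ)) θ) θ := by
  intro θ
  set F : EuclideanSpace ℝ (Fin p) × EuclideanSpace ℝ (Fin d) → ℝ :=
    fun q => (1 / 2 : ℝ) * ‖q.2 - z‖ ^ 2 + g q.1 q.2
  have hF : Differentiable ℝ F :=
    ((contDiff_const.mul ((contDiff_snd.sub contDiff_const).norm_sq ℝ)).add hg).differentiable
      one_ne_zero
  have hvalue := (hF (θ, ystar θ)).hasFDerivAt_comp_prodMk_of_isLocalMin (hydiff θ)
    (Filter.Eventually.of_forall (hmin θ))
  rw [hasGradientAt_iff_hasFDerivAt, gradient, LinearIsometryEquiv.apply_symm_apply]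
  simpa only [F, fderiv_const_add] using hvalue
end

section
/- Let (Ω, F, P) be a probability space with a filtration (F_j)_{j≥0}, let L : ℝ^p → ℝ be differentiable with L(θ) ≥ L_inf for all θ, and let (θ_j)_{j≥0} be an (F_j)-adapted sequence of ℝ^p-valued random vectors such that L(θ_j) and ‖∇L(θ_j)‖² are integrable for every j. Let (α_j)_{j≥0} be positive reals with Σ_j α_j = ∞ and Σ_j α_j² < ∞, and suppose there are constants U > 0 and C ≥ 0 such that for every j, E[L(θ_{j+1}) | F_j] ≤ L(θ_j) − α_j U ‖∇L(θ_j)‖² + α_j² C almost surely. Let A_K = Σ_{j=0}^{K−1} α_j. Then lim_{K→∞} E[(1/A_K) Σ_{j=0}^{K−1} α_j ‖∇L(θ_j)‖²] = 0, i.e., the weighted Cesàro averages of the squared gradient norms converge to zero in expectation. -/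
open MeasureTheory Filter
open scoped MeasureTheory

/-!
Taking expectations in the conditional descent inequality gives the deterministic recursion
`E L(θ_{j+1}) ≤ E L(θ_j) - α_j U E‖∇L(θ_j)‖² + α_j² C`. Telescoping it and using `L ≥ L_inf`
bounds `Σ_j α_j E‖∇L(θ_j)‖²` uniformly by `(E L(θ_0) - L_inf + C Σ_j α_j²) / U`, so dividing by
`A_K → ∞` sends the weighted averages to zero.
-/

theorem MeasureTheory.integral_le_of_condExp_le {Ω : Type*} {m m0 : MeasurableSpace Ω}
    {P : Measure Ω} [IsFiniteMeasure P] (hm : m ≤ m0) {f g : Ω → ℝ} (hg : Integrable g P)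
    (hfg : P[f|m] ≤ᵐ[P] g) : ∫ ω, f ω ∂P ≤ ∫ ω, g ω ∂P := by
  rw [← integral_condExp hm]
  exact integral_mono_ae integrable_condExp hg hfg

theorem add_sum_range_le_of_le_sub_add {a b c : ℕ → ℝ} (h : ∀ j, a (j + 1) ≤ a j - b j + c j)
    (K : ℕ) : a K + ∑ j ∈ Finset.range K, b j ≤ a 0 + ∑ j ∈ Finset.range K, c j := by
  induction K with
  | zero => simp
  | succ K ih =>
    rw [Finset.sum_range_succ, Finset.sum_range_succ]
    linarith [h K]

theorem sum_range_mul_le_of_descent {ℓ e α : ℕ → ℝ} {Linf U C : ℝ} (hlb : ∀ j, Linf ≤ ℓ j)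
    (hU : 0 < U) (hC : 0 ≤ C) (hsq : Summable fun j => α j ^ 2)
    (hdesc : ∀ j, ℓ (j + 1) ≤ ℓ j - α j * U * e j + α j ^ 2 * C) (K : ℕ) :
    ∑ j ∈ Finset.range K, α j * e j ≤ (ℓ 0 - Linf + C * ∑' j, α j ^ 2) / U := by
  have htele := add_sum_range_le_of_le_sub_add (c := fun j => α j ^ 2 * C) hdesc K
  have hsq_le : ∑ j ∈ Finset.range K, α j ^ 2 ≤ ∑' j, α j ^ 2 :=
    hsq.sum_le_tsum _ fun j _ => sq_nonneg _
  rw [← Finset.sum_mul] at htele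
  have hmul : ∑ j ∈ Finset.range K, α j * U * e j = U * ∑ j ∈ Finset.range K, α j * e j := by
    rw [Finset.mul_sum]; exact Finset.sum_congr rfl fun j _ => by ring
  rw [hmul] at htele
  rw [le_div_iff₀ hU]
  nlinarith [hlb K, mul_le_mul_of_nonneg_left hsq_le hC]

theorem tendsto_one_div_mul_of_tendsto_atTop {A s : ℕ → ℝ} {B : ℝ} (hA : Tendsto A atTop atTop)
    (hs : ∀ K, 0 ≤ s K) (hsB : ∀ K, s K ≤ B) :
    Tendsto (fun K => 1 / A K * s K) atTop (nhds 0) := by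
  have hinv : Tendsto (fun K => 1 / A K) atTop (nhds 0) := by
    simpa [one_div, Pi.inv_def] using hA.inv_tendsto_atTop
  refine hinv.zero_mul_isBoundedUnder_le ⟨B, eventually_map.2 (Eventually.of_forall fun K => ?_)⟩
  simpa [Real.norm_eq_abs, abs_of_nonneg (hs K)] using hsB K

theorem stmt_14_general (p : ℕ)
    {Ω : Type*} {m0 : MeasurableSpace Ω} (P : Measure Ω) [IsProbabilityMeasure P]
    (ℱ : Filtration ℕ m0)
    (Lf : EuclideanSpace ℝ (Fin p) → ℝ)
    (gradL : EuclideanSpace ℝ (Fin p) → EuclideanSpace ℝ (Fin p))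
    (Linf : ℝ) (hlb : ∀ x, Linf ≤ Lf x)
    (θ : ℕ → Ω → EuclideanSpace ℝ (Fin p))
    (hLint : ∀ j, Integrable (fun ω => Lf (θ j ω)) P)
    (hGint : ∀ j, Integrable (fun ω => ‖gradL (θ j ω)‖ ^ 2) P)
    (α : ℕ → ℝ) (hαpos : ∀ j, 0 < α j)
    (hdiv : ¬ Summable α) (hsq : Summable (fun j => α j ^ 2))
    (U C : ℝ) (hU : 0 < U) (hC : 0 ≤ C)
    (hrec : ∀ j, P[fun ω => Lf (θ (j + 1) ω)|ℱ j] ≤ᵐ[P]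
      fun ω => Lf (θ j ω) - α j * U * ‖gradL (θ j ω)‖ ^ 2 + α j ^ 2 * C) :
    Tendsto
      (fun K => ∫ ω, (1 / (∑ j ∈ Finset.range K, α j)) *
        ∑ j ∈ Finset.range K, α j * ‖gradL (θ j ω)‖ ^ 2 ∂P)
      atTop (nhds 0) := by
  set ℓ : ℕ → ℝ := fun j => ∫ ω, Lf (θ j ω) ∂P
  set e : ℕ → ℝ := fun j => ∫ ω, ‖gradL (θ j ω)‖ ^ 2 ∂P
  have hdesc : ∀ j, ℓ (j + 1) ≤ ℓ j - α j * U * e j + α j ^ 2 * C := by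
    intro j
    have hint : Integrable (fun ω => Lf (θ j ω) - α j * U * ‖gradL (θ j ω)‖ ^ 2) P :=
      (hLint j).sub ((hGint j).const_mul _)
    have h : ℓ (j + 1) ≤ ∫ ω, (Lf (θ j ω) - α j * U * ‖gradL (θ j ω)‖ ^ 2 + α j ^ 2 * C) ∂P :=
      integral_le_of_condExp_le (ℱ.le j) (hint.add (integrable_const _)) (hrec j)
    rwa [integral_add hint (integrable_const _), integral_sub (hLint j) ((hGint j).const_mul _),
      integral_const_mul, integral_const, probReal_univ, one_smul] at h
  have hℓlb : ∀ j, Linf ≤ ℓ j := fun j => by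
    simpa using integral_mono (integrable_const Linf) (hLint j) fun ω => hlb _
  have hexpect : ∀ K, ∫ ω, (1 / (∑ j ∈ Finset.range K, α j)) *
      ∑ j ∈ Finset.range K, α j * ‖gradL (θ j ω)‖ ^ 2 ∂P =
      1 / (∑ j ∈ Finset.range K, α j) * ∑ j ∈ Finset.range K, α j * e j := by
    intro K
    rw [integral_const_mul, integral_finsetSum _ fun j _ => (hGint j).const_mul (α j)]
    simp only [integral_const_mul, e]
  simp only [hexpect]
  exact tendsto_one_div_mul_of_tendsto_atTop
    ((not_summable_iff_tendsto_nat_atTop_of_nonneg fun j => (hαpos j).le).mp hdiv)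
    (fun K => Finset.sum_nonneg fun j _ =>
      mul_nonneg (hαpos j).le (integral_nonneg fun ω => by positivity))
    (sum_range_mul_le_of_descent hℓlb hU hC hsq hdesc)

/-- Convergence of the weighted Cesàro averages of squared gradient norms for SGD with
inexact gradients, under the conditional one-step descent inequality and Robbins–Monro
step sizes. -/
theorem stmt_14 (p : ℕ)
    {Ω : Type*} {m0 : MeasurableSpace Ω} (P : Measure Ω) [IsProbabilityMeasure P]
    (ℱ : Filtration ℕ m0)
    (Lf : EuclideanSpace ℝ (Fin p) → ℝ)
    (gradL : EuclideanSpace ℝ (Fin p) → EuclideanSpace ℝ (Fin p))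
    (hgrad : ∀ x, HasGradientAt Lf (gradL x) x)
    (Linf : ℝ) (hlb : ∀ x, Linf ≤ Lf x)
    (θ : ℕ → Ω → EuclideanSpace ℝ (Fin p))
    (hadapted : Adapted ℱ θ)
    (hLint : ∀ j, Integrable (fun ω => Lf (θ j ω)) P)
    (hGint : ∀ j, Integrable (fun ω => ‖gradL (θ j ω)‖ ^ 2) P)
    (α : ℕ → ℝ) (hαpos : ∀ j, 0 < α j)
    (hdiv : ¬ Summable α) (hsq : Summable (fun j => α j ^ 2))
    (U C : ℝ) (hU : 0 < U) (hC : 0 ≤ C)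
    (hrec : ∀ j, P[fun ω => Lf (θ (j + 1) ω)|ℱ j] ≤ᵐ[P]
      fun ω => Lf (θ j ω) - α j * U * ‖gradL (θ j ω)‖ ^ 2 + α j ^ 2 * C) :
    Tendsto
      (fun K => ∫ ω, (1 / (∑ j ∈ Finset.range K, α j)) *
        ∑ j ∈ Finset.range K, α j * ‖gradL (θ j ω)‖ ^ 2 ∂P)
      atTop (nhds 0) :=
  stmt_14_general p P ℱ Lf gradL Linf hlb θ hLint hGint α hαpos hdiv hsq U C hU hC hrec
end

section
/- Let (Ω, F, P) be a probability space with a filtration (F_j)_{j≥0}, let L : ℝ^p → ℝ be differentiable with L(θ) ≥ L_inf for all θ, and let (θ_j)_{j≥0} be an (F_j)-adapted sequence of ℝ^p-valued random vectors such that L(θ_j) and ‖∇L(θ_j)‖² are integrable for every j. Let (α_j)_{j≥0} be positive reals with Σ_j α_j = ∞ and Σ_j α_j² < ∞, and suppose there are constants U > 0 and C ≥ 0 such that for every j, E[L(θ_{j+1}) | F_j] ≤ L(θ_j) − α_j U ‖∇L(θ_j)‖² + α_j² C almost surely. Then liminf_{j→∞} E[‖∇L(θ_j)‖²] = 0. 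-/
open MeasureTheory Filter
open scoped MeasureTheory

/-- Under the conditional one-step descent inequality and Robbins–Monro step sizes,
the expected squared gradient norms of the SGD iterates satisfy
`liminf_j E[‖∇L(θ_j)‖²] = 0`. -/
theorem stmt_15 (p : ℕ)
    {Ω : Type*} {m0 : MeasurableSpace Ω} (P : Measure Ω) [IsProbabilityMeasure P]
    (ℱ : Filtration ℕ m0)
    (Lf : EuclideanSpace ℝ (Fin p) → ℝ)
    (gradL : EuclideanSpace ℝ (Fin p) → EuclideanSpace ℝ (Fin p))
    (hgrad : ∀ x, HasGradientAt Lf (gradL x) x)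
    (Linf : ℝ) (hlb : ∀ x, Linf ≤ Lf x)
    (θ : ℕ → Ω → EuclideanSpace ℝ (Fin p))
    (hadapted : Adapted ℱ θ)
    (hLint : ∀ j, Integrable (fun ω => Lf (θ j ω)) P)
    (hGint : ∀ j, Integrable (fun ω => ‖gradL (θ j ω)‖ ^ 2) P)
    (α : ℕ → ℝ) (hαpos : ∀ j, 0 < α j)
    (hdiv : ¬ Summable α) (hsq : Summable (fun j => α j ^ 2))
    (U C : ℝ) (hU : 0 < U) (hC : 0 ≤ C)
    (hrec : ∀ j, P[fun ω => Lf (θ (j + 1) ω)|ℱ j] ≤ᵐ[P]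
      fun ω => Lf (θ j ω) - α j * U * ‖gradL (θ j ω)‖ ^ 2 + α j ^ 2 * C) :
    liminf (fun j => ∫ ω, ‖gradL (θ j ω)‖ ^ 2 ∂P) atTop = 0 := by
  set b : ℕ → ℝ := fun j => ∫ ω, ‖gradL (θ j ω)‖ ^ 2 ∂P with hbdef
  set f : ℕ → ℝ := fun j => ∫ ω, Lf (θ j ω) ∂P with hfdef
  have hbnn : ∀ j, 0 ≤ b j := fun j => integral_nonneg fun ω => by positivity
  have hRHSint : ∀ j, Integrable
      (fun ω => Lf (θ j ω) - α j * U * ‖gradL (θ j ω)‖ ^ 2 + α j ^ 2 * C) P := fun j =>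
    ((hLint j).sub ((hGint j).const_mul _)).add (integrable_const _)
  have hstep : ∀ j, f (j + 1) ≤ f j - α j * U * b j + α j ^ 2 * C := by
    intro j
    have h1 : ∫ ω, (P[fun ω => Lf (θ (j + 1) ω)|ℱ j]) ω ∂P = f (j + 1) :=
      integral_condExp (ℱ.le j)
    have h2 := integral_mono_ae integrable_condExp (hRHSint j) (hrec j)
    rw [h1] at h2
    have hsub : Integrable (fun ω => Lf (θ j ω) - α j * U * ‖gradL (θ j ω)‖ ^ 2) P :=
      (hLint j).sub ((hGint j).const_mul _)
    calc f (j + 1)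
        ≤ ∫ ω, (Lf (θ j ω) - α j * U * ‖gradL (θ j ω)‖ ^ 2 + α j ^ 2 * C) ∂P := h2
      _ = f j - α j * U * b j + α j ^ 2 * C := by
          rw [integral_add hsub (integrable_const _),
            integral_sub (hLint j) ((hGint j).const_mul (α j * U)), integral_const_mul,
            integral_const]
          simp [hbdef, hfdef]
  have hflb : ∀ n, Linf ≤ f n := by
    intro n
    have := integral_mono (integrable_const Linf) (hLint n) fun ω => hlb _
    simpa using this
  have hα2nn : ∀ j, 0 ≤ α j ^ 2 := fun j => sq_nonneg _
  have hsum : Summable (fun j => α j * U * b j) := by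
    apply summable_of_sum_range_le
      (fun j => mul_nonneg (mul_nonneg (hαpos j).le hU.le) (hbnn j))
      (c := f 0 - Linf + C * ∑' j, α j ^ 2)
    intro n
    have key : ∀ j, α j * U * b j ≤ f j - f (j + 1) + α j ^ 2 * C := fun j => by
      linarith [hstep j]
    calc ∑ j ∈ Finset.range n, α j * U * b j
        ≤ ∑ j ∈ Finset.range n, (f j - f (j + 1) + α j ^ 2 * C) :=
          Finset.sum_le_sum fun j _ => key j
      _ = (f 0 - f n) + (∑ j ∈ Finset.range n, α j ^ 2) * C := by
          rw [Finset.sum_add_distrib, Finset.sum_range_sub', ← Finset.sum_mul]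
      _ ≤ f 0 - Linf + C * ∑' j, α j ^ 2 := by
          have h1 : (∑ j ∈ Finset.range n, α j ^ 2) ≤ ∑' j, α j ^ 2 :=
            Summable.sum_le_tsum _ (fun j _ => hα2nn j) hsq
          have h2 := hflb n
          nlinarith
  have hfreq : ∀ ε : ℝ, 0 < ε → ∃ᶠ j in atTop, b j ≤ ε := by
    intro ε hε
    by_contra h
    rw [not_frequently] at h
    simp only [not_le] at h
    obtain ⟨N, hN⟩ := eventually_atTop.1 h
    apply hdiv
    rw [← summable_nat_add_iff N]
    have hg : Summable (fun j => (U * ε)⁻¹ * (α (j + N) * U * b (j + N))) := by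
      exact ((summable_nat_add_iff N).2 (hsum.mul_left _))
    refine hg.of_nonneg_of_le (fun j => (hαpos _).le) fun j => ?_
    have hb : ε ≤ b (j + N) := (hN (j + N) (Nat.le_add_left _ _)).le
    have h3 : α (j + N) * (U * ε) ≤ α (j + N) * U * b (j + N) := by
      have := mul_le_mul_of_nonneg_left hb
        (mul_nonneg (hαpos (j + N)).le hU.le)
      nlinarith
    calc α (j + N) = (U * ε)⁻¹ * (α (j + N) * (U * ε)) := by
          field_simp
      _ ≤ (U * ε)⁻¹ * (α (j + N) * U * b (j + N)) :=
          mul_le_mul_of_nonneg_left h3 (by positivity)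
  have hbdd : IsBoundedUnder (· ≥ ·) atTop b := isBoundedUnder_of ⟨0, fun j => hbnn j⟩
  have hle : liminf b atTop ≤ 0 := by
    refine le_of_forall_pos_le_add fun ε hε => ?_
    simpa using liminf_le_of_frequently_le (hfreq ε hε) hbdd
  have hge : 0 ≤ liminf b atTop := by
    exact le_liminf_of_le (IsCoboundedUnder.of_frequently_le (hfreq 1 one_pos))
      (Eventually.of_forall hbnn)
  exact le_antisymm hle hge
end

section
/- Let (ℓ_j)_{j≥0} be a real sequence with ℓ_j ≥ ℓ_inf for all j, let (a_j)_{j≥0} be nonnegative reals, let (α_j)_{j≥0} be positive reals with Σ_j α_j = ∞ and Σ_j α_j² < ∞, and let U > 0 and C ≥ 0 be constants such that ℓ_{j+1} ≤ ℓ_j − U α_j a_j + C α_j² for every j. Then Σ_{j=0}^{∞} α_j a_j < ∞, and with A_K = Σ_{j=0}^{K−1} α_j one has lim_{K→∞} (1/A_K) Σ_{j=0}^{K−1} α_j a_j = 0. -/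
/-!
Telescoping the one-step inequality bounds the partial sums of `U α_j a_j` by
`ℓ_0 - ℓ_inf` plus the partial sums of the summable sequence `C α_j²`, so `Σ α_j a_j`
converges. The weighted averages are then a convergent sequence divided by
`A_K = Σ_{j<K} α_j`, which tends to infinity because `Σ α_j` diverges.
-/

open Filter Finset

theorem sum_range_le_sub_add {ℓ b c : ℕ → ℝ} (hrec : ∀ j, ℓ (j + 1) ≤ ℓ j - b j + c j)
    (K : ℕ) : ∑ j ∈ range K, b j ≤ ℓ 0 - ℓ K + ∑ j ∈ range K, c j :=
  calc ∑ j ∈ range K, b j ≤ ∑ j ∈ range K, (ℓ j - ℓ (j + 1) + c j) :=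
        sum_le_sum fun j _ => by linarith [hrec j]
    _ = ℓ 0 - ℓ K + ∑ j ∈ range K, c j := by rw [sum_add_distrib, sum_range_sub']

theorem summable_of_le_sub_add {ℓ b c : ℕ → ℝ} {m : ℝ} (hlb : ∀ j, m ≤ ℓ j)
    (hb : ∀ j, 0 ≤ b j) (hc : Summable c) (hrec : ∀ j, ℓ (j + 1) ≤ ℓ j - b j + c j) :
    Summable b := by
  obtain ⟨B, hB⟩ := hc.hasSum.tendsto_sum_nat.bddAbove_range
  refine summable_of_sum_range_le (c := ℓ 0 - m + B) hb fun K => ?_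
  linarith [sum_range_le_sub_add hrec K, hlb K, hB ⟨K, rfl⟩]

theorem stmt_17_general (ℓ a α : ℕ → ℝ) (ℓinf : ℝ)
    (hlb : ∀ j, ℓinf ≤ ℓ j)
    (ha : ∀ j, 0 ≤ a j)
    (hαpos : ∀ j, 0 < α j)
    (hdiv : ¬ Summable α) (hsq : Summable (fun j => α j ^ 2))
    (U C : ℝ) (hU : 0 < U)
    (hrec : ∀ j, ℓ (j + 1) ≤ ℓ j - U * α j * a j + C * α j ^ 2) :
    Summable (fun j => α j * a j) ∧
    Tendsto
      (fun K => (1 / (∑ j ∈ Finset.range K, α j)) * ∑ j ∈ Finset.range K, α j * a j)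
      atTop (nhds 0) := by
  have hUαa : Summable fun j => U * α j * a j :=
    summable_of_le_sub_add hlb (fun j => mul_nonneg (mul_pos hU (hαpos j)).le (ha j))
      (hsq.mul_left C) hrec
  have hαa : Summable fun j => α j * a j := by
    simpa only [mul_assoc, summable_mul_left_iff hU.ne'] using hUαa
  have hA : Tendsto (fun K => ∑ j ∈ range K, α j) atTop atTop :=
    (not_summable_iff_tendsto_nat_atTop_of_nonneg fun j => (hαpos j).le).1 hdiv
  refine ⟨hαa, ?_⟩
  simpa only [one_div_mul_eq_div] using hαa.hasSum.tendsto_sum_nat.div_atTop hA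

/-- Deterministic recursion underlying the SGD convergence analysis: if
`ℓ_{j+1} ≤ ℓ_j − U α_j a_j + C α_j²` with `ℓ` bounded below, `a_j ≥ 0`, `α_j > 0`,
`Σ α_j = ∞` and `Σ α_j² < ∞`, then `Σ α_j a_j < ∞` and the weighted Cesàro averages
`(1/A_K) Σ_{j<K} α_j a_j` tend to `0`. -/
theorem stmt_17 (ℓ a α : ℕ → ℝ) (ℓinf : ℝ)
    (hlb : ∀ j, ℓinf ≤ ℓ j)
    (ha : ∀ j, 0 ≤ a j)
    (hαpos : ∀ j, 0 < α j)
    (hdiv : ¬ Summable α) (hsq : Summable (fun j => α j ^ 2))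
    (U C : ℝ) (hU : 0 < U) (hC : 0 ≤ C)
    (hrec : ∀ j, ℓ (j + 1) ≤ ℓ j - U * α j * a j + C * α j ^ 2) :
    Summable (fun j => α j * a j) ∧
    Tendsto
      (fun K => (1 / (∑ j ∈ Finset.range K, α j)) * ∑ j ∈ Finset.range K, α j * a j)
      atTop (nhds 0) :=
  stmt_17_general ℓ a α ℓinf hlb ha hαpos hdiv hsq U C hU hrec
end

section
/- Let Σ₀ and Σ₁ be real symmetric d×d matrices with Σ₀ positive definite and Σ₁ positive semidefinite, and define Γ = Σ₀^{−1/2} (Σ₀^{1/2} Σ₁ Σ₀^{1/2})^{1/2} Σ₀^{−1/2}, where M^{1/2} denotes the unique positive semidefinite square root of a positive semidefinite matrix M and Σ₀^{−1/2} the inverse of Σ₀^{1/2}. Then Γ is symmetric positive semidefinite and Γ Σ₀ Γᵀ = Γ Σ₀ Γ = Σ₁; consequently the linear map x ↦ Γ x transforms a random vector with covariance Σ₀ and mean zero into one with covariance Σ₁, i.e., it pushes the centered Gaussian with covariance Σ₀ forward to the centered Gaussian with covariance Σ₁. -/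
/-!
`Γ = S⁻¹ R S⁻¹` is the congruence of the positive semidefinite `R` by the symmetric `S⁻¹`,
hence positive semidefinite (in particular symmetric), and
`Γ Σ₀ Γ = S⁻¹ R (S⁻¹ S S S⁻¹) R S⁻¹ = S⁻¹ R² S⁻¹ = S⁻¹ (S Σ₁ S) S⁻¹ = Σ₁`.
-/

open Matrix

namespace Matrix

variable {n : Type*} [Fintype n] [DecidableEq n]

lemma inv_mul_mul_inv_mul_mul_self_mul_inv_mul_mul_inv {α : Type*} [CommRing α]
    {S R Sigma : Matrix n n α} (hS : IsUnit S.det) (hR : R * R = S * Sigma * S) :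
    S⁻¹ * R * S⁻¹ * (S * S) * (S⁻¹ * R * S⁻¹) = Sigma := by
  calc S⁻¹ * R * S⁻¹ * (S * S) * (S⁻¹ * R * S⁻¹)
      = S⁻¹ * (R * R) * S⁻¹ := by
        simp only [Matrix.mul_assoc, nonsing_inv_mul_cancel_left _ _ hS,
          mul_nonsing_inv_cancel_left _ _ hS]
    _ = Sigma := by
        rw [hR]
        simp only [Matrix.mul_assoc, nonsing_inv_mul_cancel_left _ _ hS, mul_nonsing_inv _ hS,
          Matrix.mul_one]

lemma PosSemidef.inv_mul_mul_inv {R : Type*} [CommRing R] [PartialOrder R] [StarRing R]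
    {S A : Matrix n n R} (hS : S.IsHermitian) (hA : A.PosSemidef) :
    (S⁻¹ * A * S⁻¹).PosSemidef := by
  simpa only [hS.inv.eq] using hA.mul_mul_conjTranspose_same S⁻¹

end Matrix

theorem stmt_19_general (d : ℕ) (Sigma0 Sigma1 : Matrix (Fin d) (Fin d) ℝ)
    (h₀ : Sigma0.PosDef)
    (S R : Matrix (Fin d) (Fin d) ℝ)
    (hS : S.PosSemidef) (hS2 : S * S = Sigma0)
    (hR : R.PosSemidef) (hR2 : R * R = S * Sigma1 * S) :
    (S⁻¹ * R * S⁻¹).PosSemidef ∧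
    (S⁻¹ * R * S⁻¹)ᵀ = S⁻¹ * R * S⁻¹ ∧
    (S⁻¹ * R * S⁻¹) * Sigma0 * (S⁻¹ * R * S⁻¹)ᵀ = Sigma1 ∧
    (S⁻¹ * R * S⁻¹) * Sigma0 * (S⁻¹ * R * S⁻¹) = Sigma1 := by
  have hSdet : IsUnit S.det := by
    rw [← isUnit_iff_isUnit_det]
    exact isUnit_of_mul_isUnit_left (by rw [hS2]; exact h₀.isUnit)
  have hpsd := PosSemidef.inv_mul_mul_inv hS.isHermitian hR
  have hsymm : (S⁻¹ * R * S⁻¹)ᵀ = S⁻¹ * R * S⁻¹ := hpsd.isHermitian.eq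
  have hcov : S⁻¹ * R * S⁻¹ * Sigma0 * (S⁻¹ * R * S⁻¹) = Sigma1 := by
    rw [← hS2]
    exact inv_mul_mul_inv_mul_mul_self_mul_inv_mul_mul_inv hSdet hR2
  exact ⟨hpsd, hsymm, by rw [hsymm, hcov], hcov⟩

/-- The closed-form Gaussian optimal transport matrix
`Γ = Σ₀^{-1/2} (Σ₀^{1/2} Σ₁ Σ₀^{1/2})^{1/2} Σ₀^{-1/2}` (with `S` the unique PSD square root
of `Σ₀` and `R` the unique PSD square root of `S Σ₁ S`) is symmetric positive semidefinite
and satisfies `Γ Σ₀ Γᵀ = Γ Σ₀ Γ = Σ₁`, i.e. it transforms covariance `Σ₀` into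
covariance `Σ₁`, pushing `N(0, Σ₀)` forward to `N(0, Σ₁)`. -/
theorem stmt_19 (d : ℕ) (Sigma0 Sigma1 : Matrix (Fin d) (Fin d) ℝ)
    (h₀ : Sigma0.PosDef) (h₁ : Sigma1.PosSemidef)
    (S R : Matrix (Fin d) (Fin d) ℝ)
    (hS : S.PosSemidef) (hS2 : S * S = Sigma0)
    (hR : R.PosSemidef) (hR2 : R * R = S * Sigma1 * S) :
    (S⁻¹ * R * S⁻¹).PosSemidef ∧
    (S⁻¹ * R * S⁻¹)ᵀ = S⁻¹ * R * S⁻¹ ∧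
    (S⁻¹ * R * S⁻¹) * Sigma0 * (S⁻¹ * R * S⁻¹)ᵀ = Sigma1 ∧
    (S⁻¹ * R * S⁻¹) * Sigma0 * (S⁻¹ * R * S⁻¹) = Sigma1 :=
  stmt_19_general d Sigma0 Sigma1 h₀ S R hS hS2 hR hR2
end
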